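/- Parametric solution with isotropic scattering: let λ > 0, ϖ ∈ [0,1], r > 0, and set a = arctan(r). Then (i) the discriminant Δ(r) := ( λr(ϖ−1) + ϖa + r )² − 4r( λ(ϖ−1) + ϖ )a is nonnegative; and (ii) defining Γ(r) = (1/2)(λϖ − λ − 1) + √Δ(r)/(2r) + ϖa/(2r) and q(r) = r(1 + Γ(r)), one has 1 + Γ(r) > 0, and Γ(r)·[ 1 − (ϖ/q(r))·a ] = −λ(1−ϖ)·[ 1 − a/q(r) ]; that is, (kτ, ωτ) = (q(r), iΓ(r)) satisfies the exact grey dispersion relation ω = −i(λ/τ)(1−ϖ)·[1 − arctan(kτ/(1−iωτ))/(kτ)]/[1 − (ϖ/(kτ))arctan(kτ/(1−iωτ))]. -/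

import Mathlib

/-!
Statement 9: parametric solution of the grey dispersion relation with isotropic
scattering (Appendix A): the discriminant
`Δ(r) = (λr(ϖ−1) + ϖ·arctan r + r)² − 4r(λ(ϖ−1) + ϖ)·arctan r` is nonnegative, and
with `Γ(r) = (λϖ−λ−1)/2 + √Δ(r)/(2r) + ϖ·arctan r/(2r)` and `q(r) = r(1+Γ(r))`,
one has `1 + Γ(r) > 0` and `Γ·(1 − (ϖ/q)·arctan r) = −λ(1−ϖ)(1 − arctan r/q)`.
-/

noncomputable section
open Real

/-- The discriminant `Δ(r)`. -/
def Dsc (lam ϖ r : ℝ) : ℝ :=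
  (lam * r * (ϖ - 1) + ϖ * Real.arctan r + r) ^ 2 -
    4 * r * (lam * (ϖ - 1) + ϖ) * Real.arctan r

/-- The parametric growth rate `Γ(r)`. -/
def Gam (lam ϖ r : ℝ) : ℝ :=
  (1 / 2) * (lam * ϖ - lam - 1) + Real.sqrt (Dsc lam ϖ r) / (2 * r) +
    ϖ * Real.arctan r / (2 * r)

theorem scattering_parametric_solution
    (lam ϖ r : ℝ) (hlam : 0 < lam) (hϖ : ϖ ∈ Set.Icc (0 : ℝ) 1) (hr : 0 < r) :
    0 ≤ Dsc lam ϖ r ∧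
    0 < 1 + Gam lam ϖ r ∧
    Gam lam ϖ r * (1 - (ϖ / (r * (1 + Gam lam ϖ r))) * Real.arctan r) =
      -lam * (1 - ϖ) * (1 - Real.arctan r / (r * (1 + Gam lam ϖ r))) := by
  obtain ⟨hϖ0, hϖ1⟩ := hϖ
  have ha0 : 0 < Real.arctan r := by
    have := Real.arctan_strictMono hr; rwa [Real.arctan_zero] at this
  have har : Real.arctan r < r := by
    have := Real.lt_tan ha0 (Real.arctan_lt_pi_div_two r)
    rwa [Real.tan_arctan] at this
  set a := Real.arctan r with ha
  have hΔ : 0 ≤ Dsc lam ϖ r := by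
    have h1 : 0 ≤ 4 * (r - a) * a * (1 - ϖ) := by
      have := mul_nonneg (mul_nonneg (mul_nonneg (by norm_num : (0:ℝ) ≤ 4)
        (sub_nonneg.mpr har.le)) ha0.le) (sub_nonneg.mpr hϖ1)
      linarith
    unfold Dsc
    rw [← ha]
    nlinarith [sq_nonneg (lam * r * (ϖ - 1) + ϖ * a + r - 2 * a)]
  set s := Real.sqrt (Dsc lam ϖ r) with hsdef
  have hs0 : 0 ≤ s := Real.sqrt_nonneg _
  have hs2 : s ^ 2 = (lam * r * (ϖ - 1) + ϖ * a + r) ^ 2 -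
      4 * r * (lam * (ϖ - 1) + ϖ) * a := by
    rw [hsdef, Real.sq_sqrt hΔ]; unfold Dsc; rw [← ha]
  have hG : Gam lam ϖ r = (1 / 2) * (lam * ϖ - lam - 1) + s / (2 * r) + ϖ * a / (2 * r) := rfl
  have hr' : (2 * r) ≠ 0 := by positivity
  have hkey : 1 + Gam lam ϖ r = (r * (1 + lam * ϖ - lam) + ϖ * a + s) / (2 * r) := by
    rw [hG]; field_simp; ring
  have hN : 0 < r * (1 + lam * ϖ - lam) + ϖ * a + s := by
    by_contra h
    push_neg at h
    have hMs : 0 ≤ -(r * (1 + lam * ϖ - lam) + ϖ * a) - s := by linarith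
    have hMps : 0 ≤ -(r * (1 + lam * ϖ - lam) + ϖ * a) + s := by linarith
    have key : r * a * (lam - lam * ϖ - ϖ) ≤ 0 := by
      nlinarith [hs2, mul_nonneg hMs hMps]
    have hM : r * (1 + lam * ϖ - lam) + ϖ * a ≤ 0 := by linarith
    nlinarith [key, mul_pos (mul_pos hr ha0) hlam, mul_pos hr ha0,
      mul_nonneg hϖ0 (sq_nonneg a), mul_nonneg (mul_nonneg hr.le ha0.le) hϖ0,
      mul_nonpos_of_nonneg_of_nonpos ha0.le hM]
  have hpos : 0 < 1 + Gam lam ϖ r := by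
    rw [hkey]; exact div_pos hN (by linarith)
  refine ⟨hΔ, hpos, ?_⟩
  have hq : r * (1 + Gam lam ϖ r) ≠ 0 := (mul_pos hr hpos).ne'
  have hquad : r * (Gam lam ϖ r) ^ 2 + (r + lam * (1 - ϖ) * r - ϖ * a) * Gam lam ϖ r +
      lam * (1 - ϖ) * (r - a) = 0 := by
    have hG2 : 2 * r * Gam lam ϖ r = r * (lam * ϖ - lam - 1) + s + ϖ * a := by
      rw [hG]; field_simp
    have h4 : (4 * r) * (r * (Gam lam ϖ r) ^ 2 + (r + lam * (1 - ϖ) * r - ϖ * a) * Gam lam ϖ r +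
        lam * (1 - ϖ) * (r - a)) = 0 := by
      linear_combination (2 * r * Gam lam ϖ r + (r * (lam * ϖ - lam - 1) + s + ϖ * a) +
        2 * (r + lam * (1 - ϖ) * r - ϖ * a)) * hG2 + hs2
    have h4r : (4 * r) ≠ 0 := by positivity
    exact (mul_eq_zero.mp h4).resolve_left h4r
  field_simp
  linear_combination hquad
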